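/- Let V be a module over a commutative ring, R: V⊗V → V⊗V a Yang–Baxter operator, and f: V → V a linear map. Define φ = δ¹(f) = R(f⊗1) + R(1⊗f) − (f⊗1)R − (1⊗f)R. Then φ is a Yang–Baxter 2-cocycle, i.e. (R⊗1)(1⊗R)(φ⊗1) + (R⊗1)(1⊗φ)(R⊗1) + (φ⊗1)(1⊗R)(R⊗1) = (1⊗R)(R⊗1)(1⊗φ) + (1⊗R)(φ⊗1)(1⊗R) + (1⊗φ)(R⊗1)(1⊗R). -/
import Mathlib


open TensorProduct

noncomputable section

variable {k : Type*} [CommRing k]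

/-- `F ⊗ 1` acting on the first two factors of `V ⊗ (V ⊗ V)`. -/
def map12 {V : Type*} [AddCommGroup V] [Module k V]
    (F : V ⊗[k] V →ₗ[k] V ⊗[k] V) :
    V ⊗[k] (V ⊗[k] V) →ₗ[k] V ⊗[k] (V ⊗[k] V) :=
  (TensorProduct.assoc k V V V).toLinearMap ∘ₗ F.rTensor V ∘ₗ
    (TensorProduct.assoc k V V V).symm.toLinearMap

/-- `1 ⊗ F` acting on the last two factors of `V ⊗ (V ⊗ V)`. -/
def map23 {V : Type*} [AddCommGroup V] [Module k V]
    (F : V ⊗[k] V →ₗ[k] V ⊗[k] V) :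
    V ⊗[k] (V ⊗[k] V) →ₗ[k] V ⊗[k] (V ⊗[k] V) :=
  F.lTensor V

/-- The Yang-Baxter equation `(F⊗1)(1⊗F)(F⊗1) = (1⊗F)(F⊗1)(1⊗F)`. -/
def YBE {V : Type*} [AddCommGroup V] [Module k V]
    (F : V ⊗[k] V →ₗ[k] V ⊗[k] V) : Prop :=
  map12 F ∘ₗ map23 F ∘ₗ map12 F = map23 F ∘ₗ map12 F ∘ₗ map23 F

/-- The second Yang-Baxter differential `δ²_{YB}`. -/
def dYB {V : Type*} [AddCommGroup V] [Module k V]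
    (R φ : V ⊗[k] V →ₗ[k] V ⊗[k] V) :
    V ⊗[k] (V ⊗[k] V) →ₗ[k] V ⊗[k] (V ⊗[k] V) :=
  map12 R ∘ₗ map23 R ∘ₗ map12 φ + map12 R ∘ₗ map23 φ ∘ₗ map12 R +
    map12 φ ∘ₗ map23 R ∘ₗ map12 R - map23 R ∘ₗ map12 R ∘ₗ map23 φ -
    map23 R ∘ₗ map12 φ ∘ₗ map23 R - map23 φ ∘ₗ map12 R ∘ₗ map23 R

/-- The first Yang-Baxter differential `δ¹_{YB}(f) = R(f⊗1) + R(1⊗f) − (f⊗1)R − (1⊗f)R`. -/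
def dYB1 {V : Type*} [AddCommGroup V] [Module k V]
    (R : V ⊗[k] V →ₗ[k] V ⊗[k] V) (f : V →ₗ[k] V) :
    V ⊗[k] V →ₗ[k] V ⊗[k] V :=
  R ∘ₗ f.rTensor V + R ∘ₗ f.lTensor V - f.rTensor V ∘ₗ R - f.lTensor V ∘ₗ R

end

open TensorProduct


section Aux
variable {k : Type*} [CommRing k] {V : Type*} [AddCommGroup V] [Module k V]

private lemma map12_add' (F G : V ⊗[k] V →ₗ[k] V ⊗[k] V) :
    map12 (F + G) = map12 F + map12 G := by
  simp [map12, LinearMap.rTensor_add, LinearMap.comp_add, LinearMap.add_comp]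

private lemma map12_sub' (F G : V ⊗[k] V →ₗ[k] V ⊗[k] V) :
    map12 (F - G) = map12 F - map12 G := by
  simp [map12, LinearMap.rTensor_sub, LinearMap.comp_sub, LinearMap.sub_comp]

private lemma map23_add' (F G : V ⊗[k] V →ₗ[k] V ⊗[k] V) :
    map23 (F + G) = map23 F + map23 G := by
  simp [map23, LinearMap.lTensor_add]

private lemma map23_sub' (F G : V ⊗[k] V →ₗ[k] V ⊗[k] V) :
    map23 (F - G) = map23 F - map23 G := by
  simp [map23, LinearMap.lTensor_sub]

private lemma map12_comp' (F G : V ⊗[k] V →ₗ[k] V ⊗[k] V) :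
    map12 (F ∘ₗ G) = map12 F ∘ₗ map12 G := by
  apply LinearMap.ext; intro x
  simp [map12, LinearMap.rTensor_comp]

private lemma map23_comp' (F G : V ⊗[k] V →ₗ[k] V ⊗[k] V) :
    map23 (F ∘ₗ G) = map23 F ∘ₗ map23 G := by
  simp [map23, LinearMap.lTensor_comp]

private lemma map12_lTensor' (f : V →ₗ[k] V) :
    map12 (f.lTensor V) = map23 (f.rTensor V) := by
  apply TensorProduct.ext
  apply LinearMap.ext; intro x
  apply TensorProduct.ext'
  intro y z
  simp [map12, map23]

private lemma comm1' (f : V →ₗ[k] V) (G : V ⊗[k] V →ₗ[k] V ⊗[k] V) :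
    map12 (f.rTensor V) ∘ₗ map23 G = map23 G ∘ₗ map12 (f.rTensor V) := by
  have h : map12 (f.rTensor V) = f.rTensor (V ⊗[k] V) := by
    apply TensorProduct.ext
    apply LinearMap.ext; intro x
    apply TensorProduct.ext'
    intro y z
    simp [map12]
  rw [h]
  show LinearMap.rTensor _ f ∘ₗ LinearMap.lTensor V G = LinearMap.lTensor V G ∘ₗ _
  rw [LinearMap.rTensor_comp_lTensor, LinearMap.lTensor_comp_rTensor]

private lemma comm3' (f : V →ₗ[k] V) (G : V ⊗[k] V →ₗ[k] V ⊗[k] V) :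
    map23 (f.lTensor V) ∘ₗ map12 G = map12 G ∘ₗ map23 (f.lTensor V) := by
  have h2 : map23 (f.lTensor V) ∘ₗ (TensorProduct.assoc k V V V).toLinearMap =
      (TensorProduct.assoc k V V V).toLinearMap ∘ₗ f.lTensor (V ⊗[k] V) := by
    apply TensorProduct.ext_threefold
    intro x y z
    simp [map23]
  have h2' : f.lTensor (V ⊗[k] V) ∘ₗ (TensorProduct.assoc k V V V).symm.toLinearMap =
      (TensorProduct.assoc k V V V).symm.toLinearMap ∘ₗ map23 (f.lTensor V) := by
    apply TensorProduct.ext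
    apply LinearMap.ext; intro x
    apply TensorProduct.ext'
    intro y z
    simp [map23]
  have h3 : f.lTensor (V ⊗[k] V) ∘ₗ G.rTensor V = G.rTensor V ∘ₗ f.lTensor (V ⊗[k] V) := by
    rw [LinearMap.lTensor_comp_rTensor, LinearMap.rTensor_comp_lTensor]
  apply LinearMap.ext; intro x
  have p2 := DFunLike.congr_fun h2
  have p2' := DFunLike.congr_fun h2'
  have p3 := DFunLike.congr_fun h3
  simp only [LinearMap.comp_apply, LinearEquiv.coe_coe] at p2 p2' p3 ⊢
  simp only [map12, LinearMap.comp_apply, LinearEquiv.coe_coe]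
  rw [p2, p3, p2']

private lemma ring_key' {M : Type*} [Ring M] (A B f1 f2 f3 : M)
    (hT : A * (B * A) = B * (A * B)) (h1 : f1 * B = B * f1) (h3 : f3 * A = A * f3) :
    A * (B * (A * f1 + A * f2 - f1 * A - f2 * A)) +
      A * ((B * f2 + B * f3 - f2 * B - f3 * B) * A) +
      (A * f1 + A * f2 - f1 * A - f2 * A) * (B * A) -
      B * (A * (B * f2 + B * f3 - f2 * B - f3 * B)) -
      B * ((A * f1 + A * f2 - f1 * A - f2 * A) * B) -
      (B * f2 + B * f3 - f2 * B - f3 * B) * (A * B) = 0 := by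
  have hD : A * B * A - B * A * B = 0 := by
    rw [mul_assoc, mul_assoc, hT, sub_self]
  have hc1 : f1 * B - B * f1 = 0 := by rw [h1, sub_self]
  have hc3 : f3 * A - A * f3 = 0 := by rw [h3, sub_self]
  have key : A * (B * (A * f1 + A * f2 - f1 * A - f2 * A)) +
      A * ((B * f2 + B * f3 - f2 * B - f3 * B) * A) +
      (A * f1 + A * f2 - f1 * A - f2 * A) * (B * A) -
      B * (A * (B * f2 + B * f3 - f2 * B - f3 * B)) -
      B * ((A * f1 + A * f2 - f1 * A - f2 * A) * B) -
      (B * f2 + B * f3 - f2 * B - f3 * B) * (A * B) =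
      (A * B * A - B * A * B) * (f1 + f2 + f3) - (f1 + f2 + f3) * (A * B * A - B * A * B) +
      A * (f1 * B - B * f1) * A - B * A * (f1 * B - B * f1) - (f1 * B - B * f1) * (A * B) +
      A * B * (f3 * A - A * f3) + (f3 * A - A * f3) * (B * A) - B * (f3 * A - A * f3) * B := by
    noncomm_ring
  rw [key, hD, hc1, hc3]
  noncomm_ring

end Aux

/-- The coboundary `δ¹(f)` of a Yang-Baxter 1-cochain is a Yang-Baxter 2-cocycle:
`δ²(δ¹(f)) = 0`. -/
theorem dYB_dYB1_eq_zero {k : Type*} [CommRing k] {V : Type*} [AddCommGroup V]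
    [Module k V] (R : V ⊗[k] V →ₗ[k] V ⊗[k] V) (hR : YBE R) (f : V →ₗ[k] V) :
    dYB R (dYB1 R f) = 0 := by
  rw [dYB, dYB1]
  rw [map12_sub', map12_sub', map12_add', map12_comp', map12_comp', map12_comp', map12_comp',
      map23_sub', map23_sub', map23_add', map23_comp', map23_comp', map23_comp', map23_comp',
      map12_lTensor']
  exact ring_key' (map12 R) (map23 R) (map12 (f.rTensor V)) (map23 (f.rTensor V))
    (map23 (f.lTensor V)) hR (comm1' f R) (comm3' f R)
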